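/- Let n > 2 be odd, k ≥ 1, and suppose c ∈ GF(2^k) with Tr_k(c) = 1. For a ∈ GF(2^{nk}) with v ≠ c and A_a(v) = 0, set b = a·(v/(v+c))^{2^k+1}. Then A_b(v + c) = 0, where A_a(x) = a^{2^k} x^{2^{2k}} + x^{2^k} + a x + c. -/

import Mathlib

/-!
Write σ for the Frobenius power x ↦ x^{2^k} and t = v/(v+c), so that b = a·t·σ(t). Since σ fixes c,
A_b(v+c) = σ(t)·(σ(a)σ²(v) + a v) + σ(v) + 2c, and the root condition A_a(v) = 0 turns the bracket into
σ(v) + c = σ(v+c). Hence σ(t) times the bracket is σ(v), and A_b(v+c) = 2σ(v) + 2c = 0 in characteristic 2.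
-/

theorem charP_two_of_card_eq_two_pow {F : Type*} [Field F] [Fintype F] {m : ℕ}
    (hF : Fintype.card F = 2 ^ m) : CharP F 2 := by
  obtain ⟨e, hp, hcard⟩ := FiniteField.card F (ringChar F)
  have hdvd : ringChar F ∣ 2 :=
    hp.dvd_of_dvd_pow (n := m) (hF ▸ hcard ▸ dvd_pow_self _ e.ne_zero)
  rw [← (Nat.prime_dvd_prime_iff_eq hp Nat.prime_two).mp hdvd]
  exact ringChar.charP F

/-- The paper's `A_a`, with an arbitrary ring endomorphism `σ` in place of `x ↦ x ^ 2 ^ k`. -/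
def polyA {F : Type*} [Field F] (σ : F →+* F) (a c x : F) : F :=
  σ a * σ (σ x) + σ x + a * x + c

theorem polyA_add_eq_zero {F : Type*} [Field F] [CharP F 2] (σ : F →+* F)
    {a c v : F} (hc : σ c = c) (hv : v ≠ c) (hroot : polyA σ a c v = 0) :
    polyA σ (a * σ (v / (v + c)) * (v / (v + c))) c (v + c) = 0 := by
  have hu : v + c ≠ 0 := fun h => hv (CharTwo.add_eq_zero.mp h)
  have hσu : σ v + c ≠ 0 := by simpa [hc] using (map_ne_zero σ).mpr hu
  have hσσu : σ (σ v) + c ≠ 0 := by simpa [hc] using (map_ne_zero σ).mpr hσu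
  unfold polyA at *
  simp only [map_mul, map_div₀, map_add, hc]
  field_simp
  linear_combination σ v * hroot + (c * σ v + c ^ 2) * CharTwo.two_eq_zero (R := F)

theorem polyA_iterateFrobenius {F : Type*} [Field F] (p k : ℕ) [ExpChar F p]
    (a c x : F) :
    polyA (iterateFrobenius F p k) a c x =
      a ^ p ^ k * x ^ p ^ (2 * k) + x ^ p ^ k + a * x + c := by
  simp only [polyA, iterateFrobenius_def, ← pow_mul, ← pow_add, two_mul]

theorem stmt13_general (n k : ℕ)
    (F : Type*) [Field F] [Fintype F] (hF : Fintype.card F = 2 ^ (n * k))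
    (c : F) (hc : c ^ (2 ^ k) = c)
    (a v : F) (hv : v ≠ c)
    (hroot : a ^ (2 ^ k) * v ^ (2 ^ (2 * k)) + v ^ (2 ^ k) + a * v + c = 0) :
    (a * (v / (v + c)) ^ (2 ^ k + 1)) ^ (2 ^ k) * (v + c) ^ (2 ^ (2 * k)) +
        (v + c) ^ (2 ^ k) + (a * (v / (v + c)) ^ (2 ^ k + 1)) * (v + c) + c = 0 := by
  have := charP_two_of_card_eq_two_pow hF
  set σ := iterateFrobenius F 2 k
  have hb : a * (v / (v + c)) ^ (2 ^ k + 1) = a * σ (v / (v + c)) * (v / (v + c)) := by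
    rw [iterateFrobenius_def, pow_succ, mul_assoc]
  rw [hb, ← polyA_iterateFrobenius]
  rw [← polyA_iterateFrobenius] at hroot
  exact polyA_add_eq_zero σ (by rwa [iterateFrobenius_def]) hv hroot

theorem stmt13 (n k : ℕ) (hn : 2 < n) (hodd : Odd n) (hk : 1 ≤ k)
    (F : Type*) [Field F] [Fintype F] (hF : Fintype.card F = 2 ^ (n * k))
    (c : F) (hc : c ^ (2 ^ k) = c)
    (htr : ∑ i ∈ Finset.range k, c ^ (2 ^ i) = 1)
    (a v : F) (hv : v ≠ c)
    (hroot : a ^ (2 ^ k) * v ^ (2 ^ (2 * k)) + v ^ (2 ^ k) + a * v + c = 0) :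
    (a * (v / (v + c)) ^ (2 ^ k + 1)) ^ (2 ^ k) * (v + c) ^ (2 ^ (2 * k)) +
        (v + c) ^ (2 ^ k) + (a * (v / (v + c)) ^ (2 ^ k + 1)) * (v + c) + c = 0 :=
  stmt13_general n k F hF c hc a v hv hroot
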